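/- arXiv:2410.14346 — 3 statements merged into one kernel-verified Lean document; each statement's English description precedes it below -/
import Mathlib

section
/- Let τ be a Möbius transformation of 𝔻 (a biholomorphic automorphism of the unit disk). Then for all z₁, z₂ on the unit circle 𝕋 one has |τ(z₁) − τ(z₂)|² = |z₁ − z₂|² · |τ'(z₁)| · |τ'(z₂)|. -/
open MeasureTheory Set Complex Real

noncomputable section

/-- The point on the unit circle `𝕋` with angle `θ`. -/
def circ (θ : ℝ) : ℂ := Complex.exp (θ * Complex.I)

/-- The closed arc of the unit circle traversed counterclockwise from `circ a` to `circ b`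
(parametrized by the angle interval `[a, b]`). -/
def arcSet (a b : ℝ) : Set ℂ := circ '' Set.Icc a b

/-- The `H^{1/2}` kernel (in the angle parametrization) of a function `v : ℝ → ℝ` defined
on (an angle interval parametrizing) an arc of the unit circle. -/
def hKernel (v : ℝ → ℝ) (p : ℝ × ℝ) : ℝ :=
  |v p.1 - v p.2| ^ 2 / (‖circ p.1 - circ p.2‖) ^ 2

/-- `v : ℝ → ℝ`, viewed as a function on the arc parametrized by the angle interval `[a,b]`,
belongs to `H^{1/2}` of the arc: it is integrable and the `H^{1/2}` double integral is finite. -/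
def MemHhalfParam (a b : ℝ) (v : ℝ → ℝ) : Prop :=
  IntegrableOn v (Set.Icc a b) volume ∧
    IntegrableOn (hKernel v) (Set.Icc a b ×ˢ Set.Icc a b) volume

/-- `u`, a function on the arc of the circle parametrized by the angle interval `[a,b]`,
belongs to `H^{1/2}` of that arc. -/
def MemHhalfOn (a b : ℝ) (u : ℂ → ℝ) : Prop :=
  MemHhalfParam a b (fun θ => u (circ θ))

/-- A Möbius transformation of the unit disk `𝔻` (a biholomorphic automorphism of `𝔻`). -/
def IsDiskMobius (τ : ℂ → ℂ) : Prop :=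
  ∃ ε w : ℂ, ‖ε‖ = 1 ∧ ‖w‖ < 1 ∧
    ∀ z : ℂ, τ z = ε * (z - w) / (1 - (starRingEnd ℂ) w * z)

/-- `G` is a (continuous, strictly increasing, `2π`-equivariant) lift of the
sense-preserving circle homeomorphism `φ`. -/
def IsCircleHomeoLift (φ : ℂ → ℂ) (G : ℝ → ℝ) : Prop :=
  Continuous G ∧ StrictMono G ∧ (∀ θ, G (θ + 2 * π) = G θ + 2 * π) ∧
    ∀ θ, φ (circ θ) = circ (G θ)

/-- The lift `H` (in the angle parametrization, on `[a,b]`) of a homeomorphism between arcs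
of the circle is absolutely continuous with derivative `d`, and `log |d|` (that is,
`log |h'|`) belongs to `H^{1/2}` of the arc: this is the Weil–Petersson class. -/
def WPData (a b : ℝ) (H d : ℝ → ℝ) : Prop :=
  IntegrableOn d (Set.Icc a b) volume ∧
    (∀ θ ∈ Set.Icc a b, H θ = H a + ∫ s in a..θ, d s) ∧
    MemHhalfParam a b (fun θ => Real.log |d θ|)

/-- A sense-preserving homeomorphism `φ` of the unit circle belongs to the Weil–Petersson
class `WP(𝕋)`: it has an absolutely continuous lift whose derivative `d` is `2π`-periodic
and integrable, with `log |d| ∈ H^{1/2}(𝕋)`. -/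
def WPCircle (φ : ℂ → ℂ) : Prop :=
  ∃ G d : ℝ → ℝ, IsCircleHomeoLift φ G ∧
    IntegrableOn d (Set.Icc 0 (2 * π)) volume ∧ (∀ θ, d (θ + 2 * π) = d θ) ∧
    (∀ θ, G θ = G 0 + ∫ s in (0:ℝ)..θ, d s) ∧
    MemHhalfParam 0 (2 * π) (fun θ => Real.log |d θ|)

/-- `φ` is quasisymmetric on the arc parametrized by the angle interval `[a,b]`. -/
def QSOn (a b : ℝ) (φ : ℂ → ℂ) : Prop :=
  ∃ C : ℝ, 1 ≤ C ∧ ∀ x y z : ℝ, a ≤ x → x ≤ y → y ≤ z → z ≤ b →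
    ‖circ x - circ y‖ = ‖circ y - circ z‖ →
    C⁻¹ ≤ ‖φ (circ x) - φ (circ y)‖ / ‖φ (circ y) - φ (circ z)‖ ∧
      ‖φ (circ x) - φ (circ y)‖ / ‖φ (circ y) - φ (circ z)‖ ≤ C

/-- `φ` is quasisymmetric on the whole circle: the quasisymmetry inequality holds for any
three points lying in this order on some arc of `𝕋`. -/
def QSCircle (φ : ℂ → ℂ) : Prop :=
  ∃ C : ℝ, 1 ≤ C ∧ ∀ x y z : ℝ, x ≤ y → y ≤ z → z ≤ x + 2 * π →
    ‖circ x - circ y‖ = ‖circ y - circ z‖ →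
    C⁻¹ ≤ ‖φ (circ x) - φ (circ y)‖ / ‖φ (circ y) - φ (circ z)‖ ∧
      ‖φ (circ x) - φ (circ y)‖ / ‖φ (circ y) - φ (circ z)‖ ≤ C

end

/-!
For a linear fractional map `f z = (a z + b) / (c z + d)` both `f z₁ - f z₂` and `f'` are explicit:
`f z₁ - f z₂ = (a d - b c) (z₁ - z₂) / ((c z₁ + d) (c z₂ + d))` and `f' z = (a d - b c) / (c z + d)²`,
so `(f z₁ - f z₂)² = (z₁ - z₂)² f'(z₁) f'(z₂)` away from the pole. The pole `1 / w̄` of a disk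
automorphism lies outside the closed disk, and taking norms gives the identity on the circle.
-/

section LinearFractional

variable {a b c d z z₁ z₂ : ℂ}

theorem hasDerivAt_linearFractional (hz : c * z + d ≠ 0) :
    HasDerivAt (fun z => (a * z + b) / (c * z + d)) ((a * d - b * c) / (c * z + d) ^ 2) z := by
  have hnum : HasDerivAt (fun z => a * z + b) a z := by
    simpa using ((hasDerivAt_id z).const_mul a).add_const b
  have hden : HasDerivAt (fun z => c * z + d) c z := by
    simpa using ((hasDerivAt_id z).const_mul c).add_const d
  exact (hnum.div hden hz).congr_deriv (by ring)

theorem linearFractional_sub (h₁ : c * z₁ + d ≠ 0) (h₂ : c * z₂ + d ≠ 0) :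
    (a * z₁ + b) / (c * z₁ + d) - (a * z₂ + b) / (c * z₂ + d)
      = (a * d - b * c) * (z₁ - z₂) / ((c * z₁ + d) * (c * z₂ + d)) := by
  rw [div_sub_div _ _ h₁ h₂]
  ring

theorem sq_sub_eq_sq_sub_mul_deriv_mul_deriv {f : ℂ → ℂ}
    (hf : ∀ z, f z = (a * z + b) / (c * z + d)) (h₁ : c * z₁ + d ≠ 0) (h₂ : c * z₂ + d ≠ 0) :
    (f z₁ - f z₂) ^ 2 = (z₁ - z₂) ^ 2 * deriv f z₁ * deriv f z₂ := by
  obtain rfl : f = fun z => (a * z + b) / (c * z + d) := funext hf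
  rw [(hasDerivAt_linearFractional h₁).deriv, (hasDerivAt_linearFractional h₂).deriv,
    linearFractional_sub h₁ h₂]
  field_simp

end LinearFractional

theorem one_sub_conj_mul_ne_zero {w z : ℂ} (hw : ‖w‖ < 1) (hz : ‖z‖ ≤ 1) :
    1 - starRingEnd ℂ w * z ≠ 0 := by
  rw [sub_ne_zero]
  intro h
  have : ‖starRingEnd ℂ w * z‖ < 1 := by
    rw [norm_mul, Complex.norm_conj]
    nlinarith [norm_nonneg w, norm_nonneg z]
  simp [← h] at this

/-- For a Möbius transformation `τ` of the unit disk and points `z₁`, `z₂`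
on the unit circle, `|τ(z₁) - τ(z₂)|² = |z₁ - z₂|² · |τ'(z₁)| · |τ'(z₂)|`. -/
theorem stmt_5 (τ : ℂ → ℂ) (hτ : IsDiskMobius τ) (z₁ z₂ : ℂ)
    (h₁ : ‖z₁‖ = 1) (h₂ : ‖z₂‖ = 1) :
    (‖τ z₁ - τ z₂‖) ^ 2
      = (‖z₁ - z₂‖) ^ 2 * ‖deriv τ z₁‖ * ‖deriv τ z₂‖ := by
  obtain ⟨ε, w, -, hw, hτ⟩ := hτ
  have hτ' : ∀ z, τ z = (ε * z + -(ε * w)) / (-starRingEnd ℂ w * z + 1) := fun z => by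
    rw [hτ]
    ring
  have hpole {z : ℂ} (hz : ‖z‖ = 1) : -starRingEnd ℂ w * z + 1 ≠ 0 := by
    simpa [neg_mul, ← sub_eq_neg_add] using one_sub_conj_mul_ne_zero hw hz.le
  have key := sq_sub_eq_sq_sub_mul_deriv_mul_deriv hτ' (hpole h₁) (hpole h₂)
  simpa only [norm_mul, norm_pow] using congrArg norm key
end

section
/- Let v : ⟨−i,i⟩ → ℝ be integrable with ∬_{⟨−i,i⟩×⟨−i,i⟩} |v(z₁)−v(z₂)|²/|z₁−z₂|² |dz₁||dz₂| < ∞, and define v̂ on the left half-circle ⟨i,−i⟩ by v̂(z) = v(−conj(z)). Then ∬_{⟨i,−i⟩×⟨−i,i⟩} |v̂(z₁) − v(z₂)|² / |z₁ − z₂|² |dz₁||dz₂| ≤ ∬_{⟨−i,i⟩×⟨−i,i⟩} |v(z₁) − v(z₂)|² / |z₁ − z₂|² |dz₁||dz₂|; in particular this mixed double integral is finite. -/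
open MeasureTheory Set Complex Real

/-! The reflection `z ↦ -conj z` maps the left half-circle onto the right one and moves each of
its points closer to every point of the right half-circle, since `(x + u)² ≤ (x - u)²` when
`x ≤ 0 ≤ u`. So, pointwise, the mixed kernel at `(z₁, z₂)` is at most the `H^{1/2}` kernel of `v`
at `(-conj z₁, z₂)`, and the change of variables `θ ↦ π - θ` in the first angle turns the
integral of the latter into the `H^{1/2}` double integral of `v`. -/

open ComplexConjugate

lemma norm_neg_conj_sub_le_norm_sub {z w : ℂ} (hz : z.re ≤ 0) (hw : 0 ≤ w.re) :
    ‖-conj z - w‖ ≤ ‖z - w‖ := by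
  rw [← sq_le_sq₀ (norm_nonneg _) (norm_nonneg _), Complex.sq_norm, Complex.sq_norm,
    Complex.normSq_apply, Complex.normSq_apply]
  simp only [sub_re, neg_re, conj_re, sub_im, neg_im, conj_im, neg_neg]
  nlinarith [mul_nonpos_of_nonpos_of_nonneg hz hw]

lemma circ_re (θ : ℝ) : (circ θ).re = Real.cos θ := by
  simp [circ, Complex.exp_ofReal_mul_I_re]

lemma neg_conj_circ (θ : ℝ) : -conj (circ θ) = circ (π - θ) := by
  simp only [circ, ← Complex.exp_conj, map_mul, Complex.conj_I, Complex.conj_ofReal]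
  rw [show ((π - θ : ℝ) : ℂ) * Complex.I = π * Complex.I + θ * (-Complex.I) by push_cast; ring,
    Complex.exp_add, Complex.exp_pi_mul_I]
  ring

lemma sq_abs_sub_div_sq_norm_le (f : ℂ → ℝ) {z z' w : ℂ} (h : ‖z' - w‖ ≤ ‖z - w‖) :
    |f z' - f w| ^ 2 / ‖z - w‖ ^ 2 ≤ |f z' - f w| ^ 2 / ‖z' - w‖ ^ 2 := by
  rcases eq_or_ne z' w with rfl | hne
  · simp
  · have hpos : 0 < ‖z' - w‖ ^ 2 := pow_pos (norm_pos_iff.mpr (sub_ne_zero.mpr hne)) 2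
    exact div_le_div_of_nonneg_left (by positivity) hpos (pow_le_pow_left₀ (norm_nonneg _) h 2)

lemma setLIntegral_prod_comp_const_sub_fst (c : ℝ) (g : ℝ × ℝ → ENNReal) (s t : Set ℝ) :
    ∫⁻ p in ((fun x => c - x) ⁻¹' s) ×ˢ t, g (c - p.1, p.2) = ∫⁻ p in s ×ˢ t, g p :=
  ((Measure.measurePreserving_sub_left volume c).prod (MeasurePreserving.id volume))
    |>.setLIntegral_comp_preimage_emb
      ((MeasurableEquiv.subLeft c).prodCongr (MeasurableEquiv.refl ℝ)).measurableEmbedding g (s ×ˢ t)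

lemma sq_abs_sub_div_le_hKernel_reflect (v : ℂ → ℝ) {θ₁ θ₂ : ℝ}
    (h₁ : θ₁ ∈ Icc (π / 2) (3 * π / 2)) (h₂ : θ₂ ∈ Icc (-(π / 2)) (π / 2)) :
    |v (-conj (circ θ₁)) - v (circ θ₂)| ^ 2 / ‖circ θ₁ - circ θ₂‖ ^ 2 ≤
      hKernel (fun θ => v (circ θ)) (π - θ₁, θ₂) := by
  have hre₁ : (circ θ₁).re ≤ 0 := by
    rw [circ_re]
    exact Real.cos_nonpos_of_pi_div_two_le_of_le h₁.1 (by linarith [h₁.2])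
  have hre₂ : 0 ≤ (circ θ₂).re := by
    rw [circ_re]
    exact Real.cos_nonneg_of_mem_Icc h₂
  rw [hKernel, ← neg_conj_circ]
  exact sq_abs_sub_div_sq_norm_le v (norm_neg_conj_sub_le_norm_sub hre₁ hre₂)

theorem stmt_9_general (v : ℂ → ℝ)
    (hfin : (∫⁻ p in Set.Icc (-(π/2)) (π/2) ×ˢ Set.Icc (-(π/2)) (π/2),
        ENNReal.ofReal (hKernel (fun θ => v (circ θ)) p)) < ⊤) :
    (∫⁻ p in Set.Icc (π/2) (3*π/2) ×ˢ Set.Icc (-(π/2)) (π/2),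
        ENNReal.ofReal (|v (-(starRingEnd ℂ) (circ p.1)) - v (circ p.2)| ^ 2 /
          (‖circ p.1 - circ p.2‖) ^ 2))
      ≤ (∫⁻ p in Set.Icc (-(π/2)) (π/2) ×ˢ Set.Icc (-(π/2)) (π/2),
          ENNReal.ofReal (hKernel (fun θ => v (circ θ)) p)) ∧
    (∫⁻ p in Set.Icc (π/2) (3*π/2) ×ˢ Set.Icc (-(π/2)) (π/2),
        ENNReal.ofReal (|v (-(starRingEnd ℂ) (circ p.1)) - v (circ p.2)| ^ 2 /
          (‖circ p.1 - circ p.2‖) ^ 2)) < ⊤ := by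
  have hleft : Icc (π / 2) (3 * π / 2) = (fun x => π - x) ⁻¹' Icc (-(π / 2)) (π / 2) := by
    rw [preimage_const_sub_Icc]
    congr 1 <;> ring
  have hle : (∫⁻ p in Icc (π / 2) (3 * π / 2) ×ˢ Icc (-(π / 2)) (π / 2),
        ENNReal.ofReal (|v (-conj (circ p.1)) - v (circ p.2)| ^ 2 / ‖circ p.1 - circ p.2‖ ^ 2))
      ≤ ∫⁻ p in Icc (-(π / 2)) (π / 2) ×ˢ Icc (-(π / 2)) (π / 2),
          ENNReal.ofReal (hKernel (fun θ => v (circ θ)) p) := by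
    calc _ ≤ ∫⁻ p in Icc (π / 2) (3 * π / 2) ×ˢ Icc (-(π / 2)) (π / 2),
            ENNReal.ofReal (hKernel (fun θ => v (circ θ)) (π - p.1, p.2)) :=
          setLIntegral_mono' (measurableSet_Icc.prod measurableSet_Icc) fun p hp =>
            ENNReal.ofReal_le_ofReal (sq_abs_sub_div_le_hKernel_reflect v hp.1 hp.2)
      _ = _ := by
        rw [hleft]
        exact setLIntegral_prod_comp_const_sub_fst π (fun p => ENNReal.ofReal (hKernel _ p)) _ _
  exact ⟨hle, hle.trans_lt hfin⟩

/-- Let `v` be integrable on the right half-circle `⟨-i,i⟩` (parametrized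
by the angle interval `[-π/2, π/2]`) with finite `H^{1/2}` double integral, and let
`v̂(z) = v(-conj z)` on the left half-circle `⟨i,-i⟩` (parametrized by `[π/2, 3π/2]`). Then
the mixed double integral `∬_{⟨i,-i⟩×⟨-i,i⟩} |v̂(z₁) - v(z₂)|²/|z₁-z₂|² |dz₁||dz₂|` is
bounded by the `H^{1/2}` double integral of `v` over `⟨-i,i⟩ × ⟨-i,i⟩`; in particular it is
finite. -/
theorem stmt_9 (v : ℂ → ℝ)
    (hv : IntegrableOn (fun θ => v (circ θ)) (Set.Icc (-(π/2)) (π/2)) volume)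
    (hfin : (∫⁻ p in Set.Icc (-(π/2)) (π/2) ×ˢ Set.Icc (-(π/2)) (π/2),
        ENNReal.ofReal (hKernel (fun θ => v (circ θ)) p)) < ⊤) :
    (∫⁻ p in Set.Icc (π/2) (3*π/2) ×ˢ Set.Icc (-(π/2)) (π/2),
        ENNReal.ofReal (|v (-(starRingEnd ℂ) (circ p.1)) - v (circ p.2)| ^ 2 /
          (‖circ p.1 - circ p.2‖) ^ 2))
      ≤ (∫⁻ p in Set.Icc (-(π/2)) (π/2) ×ˢ Set.Icc (-(π/2)) (π/2),
          ENNReal.ofReal (hKernel (fun θ => v (circ θ)) p)) ∧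
    (∫⁻ p in Set.Icc (π/2) (3*π/2) ×ˢ Set.Icc (-(π/2)) (π/2),
        ENNReal.ofReal (|v (-(starRingEnd ℂ) (circ p.1)) - v (circ p.2)| ^ 2 /
          (‖circ p.1 - circ p.2‖) ^ 2)) < ⊤ :=
  stmt_9_general v hfin
end

section
/- Let β ∈ (−1,1), set c = (((1−β)/(1+β))² + 1)^{−1/2} and t = (1−c)/(1+c), and define h = m ∘ s ∘ m where m(z) = (1−z)/(1+z) and s(z) = c·√(z²+1) with the principal branch of the square root. Then h is a holomorphic injective map of the open unit disk 𝔻 onto the slit disk D_t = 𝔻 \ [t,1), it satisfies h(β) = 0 and h(1) = t (boundary value at z = 1), and its continuous boundary extension satisfies h(i) = h(−i) = 1. -/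
open MeasureTheory Set Complex Real

/-- The Möbius transformation `m(z) = (1-z)/(1+z)`, carrying `𝔻` onto the right half-plane
and vice versa. -/
noncomputable def mSlit (z : ℂ) : ℂ := (1 - z) / (1 + z)

/-- The map `s(z) = c·√(z² + 1)` (principal branch of the square root). -/
noncomputable def sSlit (c : ℝ) (z : ℂ) : ℂ := (c : ℂ) * (z ^ 2 + 1) ^ (1 / 2 : ℂ)

/-- The conformal map `h = m ∘ s ∘ m` of `𝔻` onto the slit disk `D_t = 𝔻 \ [t, 1)`. -/
noncomputable def hSlit (c : ℝ) (z : ℂ) : ℂ := mSlit (sSlit c (mSlit z))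

/-!
`m` is an involution exchanging `𝔻` and the right half-plane `H`. On `H` the map
`w ↦ √(w² + 1)` is injective, since a point of `H` is determined by its square, and its image is
`H \ (0, 1]`: as `w` ranges over `H`, `w²` ranges over the slit plane `ℂ \ (-∞, 0]`, and
`u² - 1` lies there for `u ∈ H` exactly when `u ∉ (0, 1]`. Hence `s` maps `H` onto `H \ (0, c]`, and
`m` carries `(0, c]` onto `[t, 1)`. At `z = ±i` the point `m z = ∓i` is a zero of `w² + 1`, so `s`
vanishes there (continuously, as `√` is continuous at `0`) and `h(±i) = m 0 = 1`.
-/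

open Metric

namespace Complex

lemma re_cpow_inv_two_pos {x : ℂ} (hx : x ∈ slitPlane) : 0 < (x ^ (2⁻¹ : ℂ)).re := by
  set y := x ^ (2⁻¹ : ℂ)
  have hsq : y ^ 2 = x := cpow_ofNat_inv_pow x 2
  have hre : 0 ≤ y.re := by rw [cpow_inv_two_re]; exact Real.sqrt_nonneg _
  refine hre.lt_of_ne fun hy => ?_
  rw [mem_slitPlane_iff, ← hsq, sq, mul_re, mul_im, ← hy] at hx
  simp only [zero_mul, zero_sub, mul_zero, add_zero, ne_eq, not_true_eq_false, or_false] at hx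
  nlinarith

lemma sq_mem_slitPlane {w : ℂ} (hw : 0 < w.re) : w ^ 2 ∈ slitPlane := by
  rw [mem_slitPlane_iff, sq, mul_re, mul_im]
  by_cases him : w.im = 0
  · left; rw [him]; nlinarith
  · right
    have := mul_ne_zero hw.ne' him
    contrapose! this
    linarith

open scoped ComplexOrder in
lemma sq_add_one_mem_slitPlane {w : ℂ} (hw : 0 < w.re) : w ^ 2 + 1 ∈ slitPlane := by
  rw [mem_slitPlane_iff_not_le_zero]
  exact fun h => mem_slitPlane_iff_not_le_zero.1 (sq_mem_slitPlane hw)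
    ((le_add_of_nonneg_right zero_le_one).trans h)

lemma eq_of_sq_eq_of_re_pos {w₁ w₂ : ℂ} (h₁ : 0 < w₁.re) (h₂ : 0 < w₂.re)
    (h : w₁ ^ 2 = w₂ ^ 2) : w₁ = w₂ :=
  (sq_eq_sq_iff_eq_or_eq_neg.1 h).resolve_right fun h' => by
    have := congrArg re h'
    rw [neg_re] at this
    linarith

lemma cpow_inv_two_eq_iff {x u : ℂ} (hu : 0 < u.re) : x ^ (2⁻¹ : ℂ) = u ↔ x = u ^ 2 := by
  constructor
  · rintro rfl
    exact (cpow_ofNat_inv_pow x 2).symm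
  · rintro rfl
    exact sq_cpow_two_inv hu

lemma exists_re_pos_sq_eq_iff {x : ℂ} : (∃ w : ℂ, 0 < w.re ∧ w ^ 2 = x) ↔ x ∈ slitPlane :=
  ⟨fun ⟨_, hw, hwx⟩ => hwx ▸ sq_mem_slitPlane hw,
    fun hx => ⟨_, re_cpow_inv_two_pos hx, cpow_ofNat_inv_pow x 2⟩⟩

lemma mem_ofReal_image_iff {v : ℂ} {s : Set ℝ} : v ∈ ofReal '' s ↔ v.im = 0 ∧ v.re ∈ s := by
  constructor
  · rintro ⟨r, hr, rfl⟩
    simpa using hr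
  · rintro ⟨him, hre⟩
    exact ⟨v.re, hre, ext rfl him.symm⟩

lemma sq_div_ofReal_sub_one_mem_slitPlane_iff {c : ℝ} (hc : 0 < c) {v : ℂ} (hv : 0 < v.re) :
    (v / c) ^ 2 - 1 ∈ slitPlane ↔ v ∉ ofReal '' Ioc 0 c := by
  have hre : ((v / c) ^ 2 - 1).re = (v.re ^ 2 - v.im ^ 2) / c ^ 2 - 1 := by
    simp only [sub_re, sq, mul_re, div_ofReal_re, div_ofReal_im, one_re]; ring
  have him : ((v / c) ^ 2 - 1).im = 2 * v.re * v.im / c ^ 2 := by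
    simp only [sub_im, sq, mul_im, div_ofReal_re, div_ofReal_im, one_im]; ring
  rw [mem_slitPlane_iff, hre, him, mem_ofReal_image_iff, mem_Ioc]
  by_cases h : v.im = 0
  · simp only [h, sq, mul_zero, zero_div, sub_zero, ne_eq, not_true_eq_false, or_false, true_and,
      not_le, hv, sub_pos, one_lt_div (mul_pos hc hc)]
    exact (mul_self_lt_mul_self_iff hc.le hv.le).symm
  · have : 2 * v.re * v.im / c ^ 2 ≠ 0 := by positivity
    simp [h, this]

end Complex

lemma mSlit_mSlit {z : ℂ} (hz : 1 + z ≠ 0) : mSlit (mSlit z) = z := by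
  unfold mSlit
  field_simp
  ring

lemma mSlit_ofReal (r : ℝ) : mSlit r = ((1 - r) / (1 + r) : ℝ) := by
  push_cast [mSlit]
  rfl

lemma mSlit_zero : mSlit 0 = 1 := by
  simp [mSlit]

lemma mSlit_one : mSlit 1 = 0 := by
  simp [mSlit]

lemma one_add_ne_zero_of_norm_lt_one {z : ℂ} (hz : ‖z‖ < 1) : 1 + z ≠ 0 := by
  rw [add_comm, ← sub_neg_eq_add, sub_ne_zero]
  rintro rfl
  simp at hz

lemma one_add_ne_zero_of_re_pos {w : ℂ} (hw : 0 < w.re) : 1 + w ≠ 0 := by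
  intro h
  have := congrArg re h
  simp only [add_re, one_re, zero_re] at this
  linarith

lemma re_mSlit_pos_iff {z : ℂ} (hz : 1 + z ≠ 0) : 0 < (mSlit z).re ↔ ‖z‖ < 1 := by
  have hre : (mSlit z).re = (1 - ‖z‖ ^ 2) / normSq (1 + z) := by
    rw [mSlit, div_re, ← add_div, Complex.sq_norm]
    simp only [normSq_apply, sub_re, sub_im, add_re, add_im, one_re, one_im]
    ring
  rw [hre, div_pos_iff_of_pos_right (normSq_pos.2 hz), sub_pos, sq_lt_one_iff₀ (norm_nonneg z)]

lemma norm_mSlit_lt_one {w : ℂ} (hw : 0 < w.re) : ‖mSlit w‖ < 1 := by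
  have hw' := one_add_ne_zero_of_re_pos hw
  have hm : 1 + mSlit w ≠ 0 := by
    have : 1 + mSlit w = 2 / (1 + w) := by rw [mSlit]; field_simp; ring
    exact this ▸ div_ne_zero two_ne_zero hw'
  rwa [← re_mSlit_pos_iff hm, mSlit_mSlit hw']

lemma invOn_mSlit : InvOn mSlit mSlit (ball 0 1) {w : ℂ | 0 < w.re} :=
  ⟨fun _ hz => mSlit_mSlit (one_add_ne_zero_of_norm_lt_one (mem_ball_zero_iff.1 hz)),
    fun _ hw => mSlit_mSlit (one_add_ne_zero_of_re_pos hw)⟩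

lemma bijOn_mSlit_ball : BijOn mSlit (ball 0 1) {w : ℂ | 0 < w.re} :=
  invOn_mSlit.bijOn
    (fun _ hz => (re_mSlit_pos_iff (one_add_ne_zero_of_norm_lt_one (mem_ball_zero_iff.1 hz))).2
      (mem_ball_zero_iff.1 hz))
    fun _ hw => mem_ball_zero_iff.2 (norm_mSlit_lt_one hw)

lemma bijOn_mSlit_re_pos : BijOn mSlit {w : ℂ | 0 < w.re} (ball 0 1) :=
  invOn_mSlit.symm.bijOn (fun _ hw => mem_ball_zero_iff.2 (norm_mSlit_lt_one hw))
    bijOn_mSlit_ball.mapsTo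

lemma image_one_sub_div_one_add_Ioc {c : ℝ} (hc : 0 < c) :
    (fun r : ℝ => (1 - r) / (1 + r)) '' Ioc 0 c = Ico ((1 - c) / (1 + c)) 1 := by
  ext s
  constructor
  · rintro ⟨r, ⟨hr, hrc⟩, rfl⟩
    refine ⟨?_, ?_⟩
    · rw [div_le_div_iff₀ (by linarith) (by linarith)]
      nlinarith
    · rw [div_lt_one (by linarith)]
      linarith
  · rintro ⟨hcs, hs⟩
    have hs' : 0 < 1 + s := by
      have : -1 < (1 - c) / (1 + c) := by rw [lt_div_iff₀ (by linarith)]; linarith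
      linarith
    refine ⟨(1 - s) / (1 + s), ⟨div_pos (by linarith) hs', ?_⟩, ?_⟩
    · rw [div_le_iff₀ (by linarith)] at hcs
      rw [div_le_iff₀ hs']
      nlinarith
    · field_simp
      ring

lemma mSlit_image_ofReal_Ioc {c : ℝ} (hc : 0 < c) :
    mSlit '' (ofReal '' Ioc 0 c) = ofReal '' Ico ((1 - c) / (1 + c)) 1 := by
  rw [image_image, ← image_one_sub_div_one_add_Ioc hc, image_image]
  exact image_congr fun r _ => mSlit_ofReal r

lemma differentiableOn_mSlit : DifferentiableOn ℂ mSlit {z | 1 + z ≠ 0} := fun _ hz =>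
  ((differentiableAt_const _).sub differentiableAt_id).div
    ((differentiableAt_const _).add differentiableAt_id) hz |>.differentiableWithinAt

lemma continuousAt_mSlit {z : ℂ} (hz : 1 + z ≠ 0) : ContinuousAt mSlit z :=
  (continuousAt_const.sub continuousAt_id).div (continuousAt_const.add continuousAt_id) hz

lemma one_add_ne_zero_of_sq_eq_neg_one {z : ℂ} (hz : z ^ 2 = -1) : 1 + z ≠ 0 := by
  intro h
  rw [show z = -1 by linear_combination h] at hz
  norm_num at hz

lemma mSlit_sq_add_one_eq_zero {z : ℂ} (hz : z ^ 2 = -1) : mSlit z ^ 2 + 1 = 0 := by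
  have h := one_add_ne_zero_of_sq_eq_neg_one hz
  rw [mSlit, div_pow, div_add_one (pow_ne_zero 2 h), div_eq_zero_iff]
  left
  linear_combination 2 * hz

lemma re_sSlit_pos {c : ℝ} (hc : 0 < c) {w : ℂ} (hw : 0 < w.re) : 0 < (sSlit c w).re := by
  rw [sSlit, re_ofReal_mul, one_div]
  exact mul_pos hc (re_cpow_inv_two_pos (sq_add_one_mem_slitPlane hw))

lemma injOn_sSlit {c : ℝ} (hc : c ≠ 0) : InjOn (sSlit c) {w : ℂ | 0 < w.re} := by
  intro w₁ hw₁ w₂ hw₂ h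
  simp only [sSlit, one_div] at h
  have h' := congrArg (· ^ 2) (mul_left_cancel₀ (ofReal_ne_zero.2 hc) h)
  simp only [cpow_ofNat_inv_pow, add_left_inj] at h'
  exact eq_of_sq_eq_of_re_pos hw₁ hw₂ h'

lemma sSlit_eq_iff {c : ℝ} (hc : 0 < c) {w v : ℂ} (hv : 0 < v.re) :
    sSlit c w = v ↔ w ^ 2 = (v / c) ^ 2 - 1 := by
  have hvc : 0 < (v / c).re := by rw [div_ofReal_re]; positivity
  rw [sSlit, one_div, mul_comm, ← eq_div_iff (ofReal_ne_zero.2 hc.ne'), cpow_inv_two_eq_iff hvc,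
    eq_sub_iff_add_eq]

lemma sSlit_image {c : ℝ} (hc : 0 < c) :
    sSlit c '' {w : ℂ | 0 < w.re} = {w : ℂ | 0 < w.re} \ ofReal '' Ioc 0 c := by
  ext v
  by_cases hv : 0 < v.re
  · simp only [mem_image, mem_ofPred_eq, sSlit_eq_iff hc hv, exists_re_pos_sq_eq_iff, mem_sdiff, hv,
      true_and, sq_div_ofReal_sub_one_mem_slitPlane_iff hc hv]
  · exact iff_of_false (fun ⟨w, hw, hwv⟩ => hv (hwv ▸ re_sSlit_pos hc hw)) fun h => hv h.1

lemma bijOn_sSlit {c : ℝ} (hc : 0 < c) :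
    BijOn (sSlit c) {w : ℂ | 0 < w.re} ({w : ℂ | 0 < w.re} \ ofReal '' Ioc 0 c) :=
  sSlit_image hc ▸ (injOn_sSlit hc.ne').bijOn_image

lemma differentiableOn_sSlit (c : ℝ) : DifferentiableOn ℂ (sSlit c) {w : ℂ | 0 < w.re} :=
  fun w hw => by
    have := sq_add_one_mem_slitPlane hw
    unfold sSlit
    fun_prop (disch := assumption)

lemma sSlit_zero (c : ℝ) : sSlit c 0 = c := by
  simp [sSlit]

lemma sSlit_eq_zero_of_sq_add_one_eq_zero (c : ℝ) {w : ℂ} (hw : w ^ 2 + 1 = 0) :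
    sSlit c w = 0 := by
  rw [sSlit, hw, zero_cpow (by norm_num), mul_zero]

lemma continuousAt_sSlit_of_sq_add_one_eq_zero (c : ℝ) {w : ℂ} (hw : w ^ 2 + 1 = 0) :
    ContinuousAt (sSlit c) w := by
  refine continuousAt_const.mul (ContinuousAt.comp (g := (· ^ (1 / 2 : ℂ))) ?_ (by fun_prop))
  rw [hw]
  exact continuousAt_cpow_const_of_re_pos (Or.inl le_rfl) (by norm_num)

lemma sSlit_sq_add_one_rpow_neg_half (A : ℝ) : sSlit ((A ^ 2 + 1) ^ (-(1 / 2) : ℝ)) A = 1 := by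
  have hA : 0 < A ^ 2 + 1 := by positivity
  rw [sSlit, show (A : ℂ) ^ 2 + 1 = ((A ^ 2 + 1 : ℝ) : ℂ) by push_cast; rfl,
    show (1 / 2 : ℂ) = ((1 / 2 : ℝ) : ℂ) by norm_num, ← ofReal_cpow hA.le, ← ofReal_mul,
    ← rpow_add hA]
  norm_num

lemma bijOn_hSlit {c : ℝ} (hc : 0 < c) :
    BijOn (hSlit c) (ball 0 1) (ball 0 1 \ ofReal '' Ico ((1 - c) / (1 + c)) 1) := by
  have hslit : ofReal '' Ioc 0 c ⊆ {w : ℂ | 0 < w.re} := by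
    rintro _ ⟨r, hr, rfl⟩
    exact hr.1
  have hm : BijOn mSlit ({w : ℂ | 0 < w.re} \ ofReal '' Ioc 0 c)
      (ball 0 1 \ ofReal '' Ico ((1 - c) / (1 + c)) 1) := by
    rw [← mSlit_image_ofReal_Ioc hc, ← bijOn_mSlit_re_pos.image_eq,
      ← bijOn_mSlit_re_pos.injOn.image_sdiff_subset hslit]
    exact (bijOn_mSlit_re_pos.injOn.mono sdiff_subset).bijOn_image
  exact hm.comp ((bijOn_sSlit hc).comp bijOn_mSlit_ball)

lemma differentiableOn_hSlit {c : ℝ} (hc : 0 < c) : DifferentiableOn ℂ (hSlit c) (ball 0 1) := by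
  have hball : ball (0 : ℂ) 1 ⊆ {z | 1 + z ≠ 0} := fun _ hz =>
    one_add_ne_zero_of_norm_lt_one (mem_ball_zero_iff.1 hz)
  have hre : {w : ℂ | 0 < w.re} ⊆ {z | 1 + z ≠ 0} := fun _ => one_add_ne_zero_of_re_pos
  exact differentiableOn_mSlit.comp
    ((differentiableOn_sSlit c).comp (differentiableOn_mSlit.mono hball) bijOn_mSlit_ball.mapsTo)
    (((bijOn_sSlit hc).comp bijOn_mSlit_ball).mapsTo.mono_right (sdiff_subset.trans hre))

lemma hSlit_ofReal_eq_zero (β : ℝ) :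
    hSlit ((((1 - β) / (1 + β)) ^ 2 + 1) ^ (-(1 / 2) : ℝ)) β = 0 := by
  rw [hSlit, mSlit_ofReal, sSlit_sq_add_one_rpow_neg_half, mSlit_one]

lemma hSlit_one (c : ℝ) : hSlit c 1 = ((1 - c) / (1 + c) : ℝ) := by
  rw [hSlit, mSlit_one, sSlit_zero, mSlit_ofReal]

lemma hSlit_eq_one_of_sq_eq_neg_one (c : ℝ) {z : ℂ} (hz : z ^ 2 = -1) : hSlit c z = 1 := by
  rw [hSlit, sSlit_eq_zero_of_sq_add_one_eq_zero c (mSlit_sq_add_one_eq_zero hz), mSlit_zero]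

lemma continuousAt_hSlit_of_sq_eq_neg_one (c : ℝ) {z : ℂ} (hz : z ^ 2 = -1) :
    ContinuousAt (hSlit c) z := by
  have hm := mSlit_sq_add_one_eq_zero hz
  refine (continuousAt_mSlit ?_).comp ((continuousAt_sSlit_of_sq_add_one_eq_zero c hm).comp
    (continuousAt_mSlit (one_add_ne_zero_of_sq_eq_neg_one hz)))
  rw [sSlit_eq_zero_of_sq_add_one_eq_zero c hm]
  norm_num

theorem stmt_12_general (β c t : ℝ)
    (hc : c = (((1 - β) / (1 + β)) ^ 2 + 1) ^ (-(1 / 2) : ℝ))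
    (ht : t = (1 - c) / (1 + c)) :
    DifferentiableOn ℂ (hSlit c) (Metric.ball 0 1) ∧
    Set.InjOn (hSlit c) (Metric.ball 0 1) ∧
    hSlit c '' Metric.ball 0 1
      = Metric.ball 0 1 \ ((fun r : ℝ => (r : ℂ)) '' Set.Ico t 1) ∧
    hSlit c β = 0 ∧
    hSlit c 1 = t ∧
    ContinuousWithinAt (hSlit c) (Metric.closedBall 0 1) Complex.I ∧
    ContinuousWithinAt (hSlit c) (Metric.closedBall 0 1) (-Complex.I) ∧
    hSlit c Complex.I = 1 ∧ hSlit c (-Complex.I) = 1 := by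
  have hc₀ : 0 < c := hc ▸ rpow_pos_of_pos (by positivity) _
  have hbij := bijOn_hSlit hc₀
  rw [← ht] at hbij
  have hI : I ^ 2 = -1 := I_sq
  have hnegI : (-I) ^ 2 = -1 := by rw [neg_sq, I_sq]
  exact ⟨differentiableOn_hSlit hc₀, hbij.injOn, hbij.image_eq, hc ▸ hSlit_ofReal_eq_zero β,
    ht ▸ hSlit_one c, (continuousAt_hSlit_of_sq_eq_neg_one c hI).continuousWithinAt,
    (continuousAt_hSlit_of_sq_eq_neg_one c hnegI).continuousWithinAt,
    hSlit_eq_one_of_sq_eq_neg_one c hI, hSlit_eq_one_of_sq_eq_neg_one c hnegI⟩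

/-- For `β ∈ (-1,1)`, `c = (((1-β)/(1+β))² + 1)^{-1/2}` and
`t = (1-c)/(1+c)`, the map `h = m ∘ s ∘ m` (with `m(z) = (1-z)/(1+z)` and
`s(z) = c√(z²+1)`) is a holomorphic injective map of `𝔻` onto the slit disk
`D_t = 𝔻 \ [t,1)` with `h(β) = 0`, boundary value `h(1) = t`, and continuous boundary
extension at `±i` with `h(i) = h(-i) = 1`. -/
theorem stmt_12 (β c t : ℝ) (hβ₁ : -1 < β) (hβ₂ : β < 1)
    (hc : c = (((1 - β) / (1 + β)) ^ 2 + 1) ^ (-(1 / 2) : ℝ))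
    (ht : t = (1 - c) / (1 + c)) :
    DifferentiableOn ℂ (hSlit c) (Metric.ball 0 1) ∧
    Set.InjOn (hSlit c) (Metric.ball 0 1) ∧
    hSlit c '' Metric.ball 0 1
      = Metric.ball 0 1 \ ((fun r : ℝ => (r : ℂ)) '' Set.Ico t 1) ∧
    hSlit c β = 0 ∧
    hSlit c 1 = t ∧
    ContinuousWithinAt (hSlit c) (Metric.closedBall 0 1) Complex.I ∧
    ContinuousWithinAt (hSlit c) (Metric.closedBall 0 1) (-Complex.I) ∧
    hSlit c Complex.I = 1 ∧ hSlit c (-Complex.I) = 1 :=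
  stmt_12_general β c t hc ht
end
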